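/- arXiv:1404.1778 — 6 statements merged into one kernel-verified Lean document; each statement's English description precedes it below -/
import Mathlib

section
/- Let f : ℝ → ℂ be a continuously differentiable function with compact support. Then the limit as ε → 0⁺ of ∫_ℝ f(x)/(x + iε) dx exists and equals ∫_{(0,∞)} (f(x) − f(−x))/x dx − iπ f(0), where the latter integral converges absolutely (the integrand (f(x) − f(−x))/x extends continuously to x = 0). -/
/-!
Since `(x + iε)⁻¹ = x / (x² + ε²) - i ε / (x² + ε²)`, the integral splits into two parts.
The kernel `x / (x² + ε²)` is odd, so folding the line onto `(0, ∞)` turns the first part into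
`∫_{(0,∞)} x² / (x² + ε²) · (f x - f (-x)) / x`; the quotient is bounded (`f` is Lipschitz) and
compactly supported, so dominated convergence applies. The second part is `π` times the
integral of `f` against the Poisson kernel `ε / (π (x² + ε²))`, an approximate identity,
hence tends to `π f 0`.
-/

open MeasureTheory Filter Set Topology

theorem HasCompactSupport.integrable_of_bound {X F : Type*} [TopologicalSpace X]
    [MeasurableSpace X] [NormedAddCommGroup F] {μ : Measure X} [IsFiniteMeasureOnCompacts μ]
    {f : X → F} (hf : HasCompactSupport f) (hmeas : AEStronglyMeasurable f μ) {C : ℝ}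
    (hC : ∀ x, ‖f x‖ ≤ C) : Integrable f μ :=
  (integrableOn_iff_integrable_of_support_subset (subset_tsupport f)).1 <|
    IntegrableOn.of_bound hf.isCompact.measure_lt_top hmeas.restrict C (ae_of_all _ hC)

theorem Complex.inv_ofReal_add_ofReal_mul_I (x y : ℝ) :
    ((x : ℂ) + y * I)⁻¹ = ((x / (x ^ 2 + y ^ 2) : ℝ) : ℂ) - I * ((y / (x ^ 2 + y ^ 2) : ℝ) : ℂ) := by
  rw [inv_def, normSq_add_mul_I, map_add, map_mul, conj_ofReal, conj_ofReal, conj_I]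
  push_cast
  ring

theorem tendsto_norm_mul_inv_one_add_sq :
    Tendsto (fun x : ℝ ↦ ‖x‖ * (1 + x ^ 2)⁻¹) (Bornology.cobounded ℝ) (𝓝 0) := by
  refine squeeze_zero' (.of_forall fun x ↦ by positivity) ?_
    (tendsto_inv_atTop_zero.comp tendsto_norm_cobounded_atTop)
  filter_upwards [tendsto_norm_cobounded_atTop.eventually_gt_atTop 0] with x (hx : 0 < ‖x‖)
  rw [Function.comp_apply, ← div_eq_mul_inv, div_le_iff₀ (by positivity), inv_mul_eq_div,
    le_div_iff₀ hx, ← sq, Real.norm_eq_abs, sq_abs]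
  linarith

section

variable {E : Type*} [NormedAddCommGroup E] [NormedSpace ℝ E]

theorem LipschitzWith.norm_inv_smul_sub_comp_neg_le {f : ℝ → E} {K : NNReal}
    (hf : LipschitzWith K f) (x : ℝ) : ‖x⁻¹ • (f x - f (-x))‖ ≤ 2 * K := by
  rcases eq_or_ne x 0 with rfl | hx
  · simp
  have hlip : ‖f x - f (-x)‖ ≤ K * (2 * |x|) := by
    simpa [← dist_eq_norm, Real.dist_eq, ← two_mul, abs_mul] using hf.dist_le_mul x (-x)
  calc ‖x⁻¹ • (f x - f (-x))‖ = |x|⁻¹ * ‖f x - f (-x)‖ := by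
        rw [norm_smul, norm_inv, Real.norm_eq_abs]
    _ ≤ |x|⁻¹ * (K * (2 * |x|)) := by gcongr
    _ = 2 * K := by field_simp

theorem LipschitzWith.integrable_inv_smul_sub_comp_neg {f : ℝ → E} {K : NNReal}
    (hf : LipschitzWith K f) (hsupp : HasCompactSupport f) :
    Integrable fun x : ℝ ↦ x⁻¹ • (f x - f (-x)) := by
  have hsupp' : HasCompactSupport fun x : ℝ ↦ f x - f (-x) :=
    hsupp.sub (hsupp.comp_homeomorph (Homeomorph.neg ℝ))
  refine hsupp'.smul_left.integrable_of_bound ?_ hf.norm_inv_smul_sub_comp_neg_le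
  exact measurable_inv.aestronglyMeasurable.smul
    (hf.continuous.sub (hf.continuous.comp continuous_neg)).aestronglyMeasurable

theorem integral_eq_setIntegral_Ioi_add_comp_neg {F : ℝ → E} (hF : Integrable F) :
    ∫ x, F x = ∫ x in Ioi 0, (F x + F (-x)) := by
  rw [integral_add hF.integrableOn hF.comp_neg.integrableOn, add_comm, integral_comp_neg_Ioi,
    neg_zero, intervalIntegral.integral_Iic_add_Ioi hF.integrableOn hF.integrableOn]

theorem integral_div_sq_add_sq_smul_eq_setIntegral_Ioi {f : ℝ → E} {ε : ℝ}
    (hf : Integrable fun x : ℝ ↦ (x / (x ^ 2 + ε ^ 2)) • f x) :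
    ∫ x, (x / (x ^ 2 + ε ^ 2)) • f x =
      ∫ x in Ioi 0, (x ^ 2 / (x ^ 2 + ε ^ 2)) • (x⁻¹ • (f x - f (-x))) := by
  rw [integral_eq_setIntegral_Ioi_add_comp_neg hf]
  refine setIntegral_congr_fun measurableSet_Ioi fun x (hx : 0 < x) ↦ ?_
  rw [smul_smul, neg_sq, neg_div, neg_smul, ← sub_eq_add_neg, ← smul_sub]
  congr 1
  field_simp

theorem tendsto_integral_sq_div_sq_add_sq_smul {μ : Measure ℝ} (hμ : ∀ᵐ x ∂μ, x ≠ 0)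
    {g : ℝ → E} (hg : Integrable g μ) :
    Tendsto (fun ε : ℝ ↦ ∫ x, (x ^ 2 / (x ^ 2 + ε ^ 2)) • g x ∂μ) (𝓝 0) (𝓝 (∫ x, g x ∂μ)) := by
  refine tendsto_integral_filter_of_dominated_convergence (fun x ↦ ‖g x‖) ?_ ?_ hg.norm ?_
  · exact .of_forall fun ε ↦ (by fun_prop : Measurable fun x : ℝ ↦ x ^ 2 / (x ^ 2 + ε ^ 2))
      |>.aestronglyMeasurable.smul hg.aestronglyMeasurable
  · refine .of_forall fun ε ↦ ae_of_all _ fun x ↦ ?_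
    rw [norm_smul]
    refine mul_le_of_le_one_left (norm_nonneg _) ?_
    rw [Real.norm_of_nonneg (by positivity)]
    exact div_le_one_of_le₀ (by nlinarith [sq_nonneg ε]) (by positivity)
  · filter_upwards [hμ] with x hx
    have hcont : ContinuousAt (fun ε : ℝ ↦ (x ^ 2 / (x ^ 2 + ε ^ 2)) • g x) 0 :=
      (continuousAt_const.div (by fun_prop) (by positivity)).smul continuousAt_const
    simpa [hx] using hcont.tendsto

/-- `ε / (x² + ε²)` is `π` times the Poisson kernel of the upper half-plane, obtained by
rescaling the Cauchy density `(π (1 + x²))⁻¹` by `ε⁻¹`. -/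
theorem tendsto_integral_div_sq_add_sq_smul [CompleteSpace E] {g : ℝ → E} (hg : Integrable g)
    (h0 : ContinuousAt g 0) :
    Tendsto (fun ε : ℝ ↦ ∫ x, (ε / (x ^ 2 + ε ^ 2)) • g x) (𝓝[>] 0) (𝓝 (Real.pi • g 0)) := by
  have hpeak := tendsto_integral_comp_smul_smul_of_integrable (μ := volume)
    (φ := fun x : ℝ ↦ Real.pi⁻¹ * (1 + x ^ 2)⁻¹) (fun x ↦ by positivity)
    (by rw [integral_const_mul, integral_univ_inv_one_add_sq, inv_mul_cancel₀ Real.pi_ne_zero])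
    (by simpa [mul_left_comm] using tendsto_norm_mul_inv_one_add_sq.const_mul Real.pi⁻¹) hg h0
  refine ((hpeak.comp tendsto_inv_nhdsGT_zero).const_smul Real.pi).congr' ?_
  filter_upwards [self_mem_nhdsWithin] with ε (hε : 0 < ε)
  simp only [Function.comp_apply, Module.finrank_self, pow_one, smul_eq_mul, ← integral_smul,
    smul_smul]
  congr with x
  congr 1
  field_simp
  ring

end

theorem integral_div_ofReal_add_ofReal_mul_I {f : ℝ → ℂ} (hf : Continuous f)
    (hsupp : HasCompactSupport f) {ε : ℝ} (hε : ε ≠ 0) :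
    ∫ x : ℝ, f x / ((x : ℂ) + (ε : ℂ) * Complex.I) =
      (∫ x in Ioi 0, (x ^ 2 / (x ^ 2 + ε ^ 2)) • (x⁻¹ • (f x - f (-x))))
        - Complex.I * ∫ x, (ε / (x ^ 2 + ε ^ 2)) • f x := by
  have hint : ∀ k : ℝ → ℝ, Continuous k → Integrable fun x ↦ k x • f x := fun k hk ↦
    (hk.smul hf).integrable_of_hasCompactSupport hsupp.smul_left
  have hden : ∀ x : ℝ, x ^ 2 + ε ^ 2 ≠ 0 := fun x ↦ by positivity
  have hodd := hint (fun x ↦ x / (x ^ 2 + ε ^ 2)) (continuous_id.div (by fun_prop) hden)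
  have heven := hint (fun x ↦ ε / (x ^ 2 + ε ^ 2)) (continuous_const.div (by fun_prop) hden)
  rw [← integral_div_sq_add_sq_smul_eq_setIntegral_Ioi hodd, ← integral_const_mul,
    ← integral_sub hodd (heven.const_mul Complex.I)]
  congr with x
  rw [div_eq_mul_inv, Complex.inv_ofReal_add_ofReal_mul_I, Complex.real_smul, Complex.real_smul]
  ring

/-- Sokhotski–Plemelj: for C¹ compactly supported `f`,
`lim_{ε→0⁺} ∫ f(x)/(x+iε) dx = ∫_{(0,∞)} (f(x)-f(-x))/x dx - iπ f(0)`,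
and the latter integral converges absolutely. -/
theorem stmt0 (f : ℝ → ℂ) (hf : ContDiff ℝ 1 f) (hsupp : HasCompactSupport f) :
    IntegrableOn (fun x : ℝ => (f x - f (-x)) / (x : ℂ)) (Ioi 0) ∧
    Tendsto (fun ε : ℝ => ∫ x : ℝ, f x / ((x : ℂ) + (ε : ℂ) * Complex.I))
      (nhdsWithin 0 (Ioi 0))
      (nhds ((∫ x in Ioi (0 : ℝ), (f x - f (-x)) / (x : ℂ))
        - (Real.pi : ℂ) * Complex.I * f 0)) := by
  obtain ⟨K, hK⟩ := hf.lipschitzWith_of_hasCompactSupport hsupp one_ne_zero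
  have hquot : (fun x : ℝ ↦ (f x - f (-x)) / (x : ℂ)) = fun x ↦ x⁻¹ • (f x - f (-x)) := by
    ext x
    rw [Complex.real_smul, div_eq_inv_mul, Complex.ofReal_inv]
  have hodd : IntegrableOn (fun x : ℝ ↦ x⁻¹ • (f x - f (-x))) (Ioi 0) :=
    (hK.integrable_inv_smul_sub_comp_neg hsupp).integrableOn
  rw [hquot]
  refine ⟨hodd, ?_⟩
  have hPV := (tendsto_integral_sq_div_sq_add_sq_smul
    (ae_restrict_of_forall_mem measurableSet_Ioi fun x hx ↦ ne_of_gt hx) hodd).mono_left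
    (nhdsWithin_le_nhds (s := Ioi 0))
  have hPoisson := tendsto_integral_div_sq_add_sq_smul
    (hf.continuous.integrable_of_hasCompactSupport hsupp) hf.continuous.continuousAt
  have hlim := hPV.sub (hPoisson.const_mul Complex.I)
  rw [Complex.real_smul, mul_left_comm, ← mul_assoc] at hlim
  refine hlim.congr' ?_
  filter_upwards [self_mem_nhdsWithin] with ε (hε : 0 < ε)
  exact (integral_div_ofReal_add_ofReal_mul_I hf.continuous hsupp hε.ne').symm
end

section
/- Let f : ℝ → ℂ be a twice continuously differentiable function with compact support contained in an interval of length L, with f(0) = 1, and let M₁, M₂ ≥ 0 satisfy |f'(x)| ≤ M₁ and |f''(x)| ≤ M₂ for all x. Then for all k ≠ 0, ‖∫_0^∞ e^{ikx} f(x) dx − i/k‖ ≤ (M₁ + L·M₂)/k². In particular ∫_0^∞ e^{ikx} f(x) dx is not fast decreasing in either direction k → ±∞, so every (0, k) with k ≠ 0 lies in the wavefront set of the Heaviside distribution. -/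
/-!
Two integrations by parts on `(0, ∞)`, whose boundary terms at `0` are `f 0 = 1` and `f' 0`,
give `k² ∫₀^∞ e^{ikx} f = i k - f'(0) - ∫₀^∞ e^{ikx} f''`. The last integral is bounded by
`L · M₂` because `f''` vanishes outside an interval of length `L`.
-/

open MeasureTheory Set

lemma HasCompactSupport.integral_Ioi_cexp_mul_deriv {g : ℝ → ℂ} (hg : ContDiff ℝ 1 g)
    (hgs : HasCompactSupport g) (c : ℂ) :
    ∫ x in Ioi (0 : ℝ), Complex.exp (c * x) * deriv g x
      = -g 0 - c * ∫ x in Ioi (0 : ℝ), Complex.exp (c * x) * g x := by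
  set e : ℝ → ℂ := fun x => Complex.exp (c * x)
  have he : ContDiff ℝ 1 e := (contDiff_const.mul Complex.ofRealCLM.contDiff).cexp
  have he' : ∀ x, HasDerivAt e (c * e x) x := fun x => by
    simpa [mul_comm] using ((Complex.ofRealCLM.hasDerivAt (x := x)).const_mul c).cexp
  have hFs : HasCompactSupport fun x => e x * g x := hgs.mul_left
  have hderiv : deriv (fun x => e x * g x) = fun x => c * (e x * g x) + e x * deriv g x :=
    funext fun x => by
      rw [((he' x).fun_mul (hg.differentiable one_ne_zero x).hasDerivAt).deriv]; ring
  have hint : Integrable fun x => e x * g x :=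
    (he.continuous.mul hg.continuous).integrable_of_hasCompactSupport hFs
  have hint' : Integrable fun x => e x * deriv g x :=
    (he.continuous.mul (hg.continuous_deriv le_rfl)).integrable_of_hasCompactSupport hgs.deriv.mul_left
  have hFTC := hFs.integral_Ioi_deriv_eq (he.mul hg) 0
  rw [hderiv, integral_add (hint.integrableOn.const_mul c) hint'.integrableOn,
    integral_const_mul] at hFTC
  simp only [e, Complex.ofReal_zero, mul_zero, Complex.exp_zero, one_mul] at hFTC ⊢
  linear_combination hFTC

lemma HasCompactSupport.integral_Ioi_cexp_mul_deriv_deriv {g : ℝ → ℂ} (hg : ContDiff ℝ 2 g)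
    (hgs : HasCompactSupport g) (c : ℂ) :
    ∫ x in Ioi (0 : ℝ), Complex.exp (c * x) * deriv (deriv g) x
      = c ^ 2 * (∫ x in Ioi (0 : ℝ), Complex.exp (c * x) * g x) + c * g 0 - deriv g 0 := by
  have hg' : ContDiff ℝ 1 (deriv g) := hg.deriv' (n := 1)
  rw [hgs.deriv.integral_Ioi_cexp_mul_deriv hg' c,
    hgs.integral_Ioi_cexp_mul_deriv (hg.of_le one_le_two) c]
  ring

lemma norm_setIntegral_le_of_support_subset_Icc {E : Type*} [NormedAddCommGroup E]
    [NormedSpace ℝ E] {F : ℝ → E} {s : Set ℝ} {a b M : ℝ} (hs : MeasurableSet s) (hab : a ≤ b)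
    (hF : Function.support F ⊆ Icc a b) (hM : ∀ x, ‖F x‖ ≤ M) :
    ‖∫ x in s, F x‖ ≤ M * (b - a) := by
  have hvol : volume (s ∩ Icc a b) < ⊤ := measure_inter_lt_top_of_right_ne_top (by simp)
  rw [setIntegral_eq_of_subset_of_forall_sdiff_eq_zero hs inter_subset_left
    fun x hx => by_contra fun h => hx.2 ⟨hx.1, hF h⟩]
  calc ‖∫ x in s ∩ Icc a b, F x‖ ≤ M * volume.real (s ∩ Icc a b) :=
        norm_setIntegral_le_of_norm_le_const hvol fun x _ => hM x
    _ ≤ M * volume.real (Icc a b) := by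
        gcongr
        · exact (norm_nonneg _).trans (hM a)
        · simp
        · exact inter_subset_right
    _ = M * (b - a) := by rw [Real.volume_real_Icc_of_le hab]

theorem stmt6_general (f : ℝ → ℂ) (hf : ContDiff ℝ 2 f) (hsupp : HasCompactSupport f)
    (L a : ℝ) (hL : tsupport f ⊆ Icc a (a + L)) (hf0 : f 0 = 1)
    (M₁ M₂ : ℝ)
    (h1 : ∀ x : ℝ, ‖deriv f x‖ ≤ M₁) (h2 : ∀ x : ℝ, ‖deriv (deriv f) x‖ ≤ M₂) :
    ∀ k : ℝ, k ≠ 0 →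
      ‖(∫ x in Ioi (0 : ℝ), Complex.exp (Complex.I * (k : ℂ) * (x : ℂ)) * f x)
          - Complex.I / (k : ℂ)‖ ≤ (M₁ + L * M₂) / k ^ 2 := by
  intro k hk
  have hnorm_exp (x : ℝ) : ‖Complex.exp (Complex.I * k * x)‖ = 1 := by
    simpa [mul_assoc] using Complex.norm_exp_I_mul_ofReal (k * x)
  have hLa : a ≤ a + L := by
    obtain ⟨ha, haL⟩ := hL (subset_tsupport f (show (0 : ℝ) ∈ Function.support f by simp [hf0]))
    exact ha.trans haL
  have hsupp₂ : Function.support (fun x : ℝ => Complex.exp (Complex.I * k * x) * deriv (deriv f) x)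
      ⊆ Icc a (a + L) :=
    Function.support_mul_subset_right _ _ |>.trans <| support_deriv_subset.trans <|
      closure_minimal (support_deriv_subset.trans hL) isClosed_Icc
  have hI₂ := norm_setIntegral_le_of_support_subset_Icc (measurableSet_Ioi (a := 0)) hLa hsupp₂
    fun x => by rw [norm_mul, hnorm_exp, one_mul]; exact h2 x
  set I₀ := ∫ x in Ioi (0 : ℝ), Complex.exp (Complex.I * k * x) * f x
  set I₂ := ∫ x in Ioi (0 : ℝ), Complex.exp (Complex.I * k * x) * deriv (deriv f) x
  have hparts : I₂ = (Complex.I * k) ^ 2 * I₀ + Complex.I * k * f 0 - deriv f 0 :=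
    hsupp.integral_Ioi_cexp_mul_deriv_deriv hf (Complex.I * k)
  have hk' : (k : ℂ) ≠ 0 := Complex.ofReal_ne_zero.2 hk
  have key : I₀ - Complex.I / k = -(deriv f 0 + I₂) / (k : ℂ) ^ 2 := by
    rw [hparts, hf0]
    field_simp
    linear_combination (k : ℂ) ^ 2 * I₀ * Complex.I_sq
  rw [key, norm_div, norm_neg, norm_pow, Complex.norm_real, Real.norm_eq_abs, sq_abs]
  gcongr
  calc _ ≤ M₁ + M₂ * (a + L - a) := (norm_add_le _ _).trans (add_le_add (h1 0) hI₂)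
    _ = M₁ + L * M₂ := by ring

/-- For `f` C² supported in an interval of length `L` with `f 0 = 1`, and bounds
`|f'| ≤ M₁`, `|f''| ≤ M₂`, for all `k ≠ 0`:
`‖∫_0^∞ e^{ikx} f(x) dx - i/k‖ ≤ (M₁ + L M₂)/k²`. -/
theorem stmt6 (f : ℝ → ℂ) (hf : ContDiff ℝ 2 f) (hsupp : HasCompactSupport f)
    (L a : ℝ) (hL : tsupport f ⊆ Icc a (a + L)) (hf0 : f 0 = 1)
    (M₁ M₂ : ℝ) (hM₁ : 0 ≤ M₁) (hM₂ : 0 ≤ M₂)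
    (h1 : ∀ x : ℝ, ‖deriv f x‖ ≤ M₁) (h2 : ∀ x : ℝ, ‖deriv (deriv f) x‖ ≤ M₂) :
    ∀ k : ℝ, k ≠ 0 →
      ‖(∫ x in Ioi (0 : ℝ), Complex.exp (Complex.I * (k : ℂ) * (x : ℂ)) * f x)
          - Complex.I / (k : ℂ)‖ ≤ (M₁ + L * M₂) / k ^ 2 :=
  stmt6_general f hf hsupp L a hL hf0 M₁ M₂ h1 h2
end

section
/- Let ε > 0 and k ∈ ℝ. Then x ↦ e^{ikx}/(x + iε)² is absolutely integrable on ℝ and ∫_ℝ e^{ikx}/(x + iε)² dx equals 2πk e^{εk} if k ≤ 0, and equals 0 if k ≥ 0. (This is consistent with the identity (x+i0⁺)^{-2} = −d/dx (x+i0⁺)^{-1} and with the paper's computation that the square of 1/(x+i0⁺) has Fourier transform 2πk θ(−k).) -/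
/-! The function `g t = min t 0 * exp (ε * min t 0)` (`negRampExp ε`) is continuous and
integrable, and since `∫_{-∞}^0 t e^{ct} dt = -1/c²` for `Re c > 0`, its Fourier transform is
`𝓕 g ξ = (2πξ + iε)⁻²`. That transform is integrable, so Fourier inversion at `k`, after the
substitution `x = 2πξ`, gives `∫ e^{ikx} (x + iε)⁻² dx = 2π g k`. -/

open MeasureTheory Filter Set
open Complex Real FourierTransform Topology

lemma ofReal_add_mul_I_ne_zero {ε : ℝ} (hε : ε ≠ 0) (x : ℝ) : (x : ℂ) + ε * I ≠ 0 :=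
  fun h => hε (by simpa using congrArg im h)

lemma integrable_inv_sq_ofReal_add_mul_I {ε : ℝ} (hε : ε ≠ 0) :
    Integrable (fun x : ℝ => (((x : ℂ) + ε * I) ^ 2)⁻¹) := by
  have hbound : Integrable (fun x : ℝ => (ε ^ 2)⁻¹ * (1 + (ε⁻¹ * x) ^ 2)⁻¹) :=
    (integrable_inv_one_add_sq.comp_mul_left' (inv_ne_zero hε)).const_mul _
  have hcont : Continuous (fun x : ℝ => (((x : ℂ) + ε * I) ^ 2)⁻¹) :=
    (by fun_prop : Continuous fun x : ℝ => ((x : ℂ) + ε * I) ^ 2).inv₀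
      fun x => pow_ne_zero 2 (ofReal_add_mul_I_ne_zero hε x)
  refine hbound.mono' hcont.aestronglyMeasurable (.of_forall fun x => le_of_eq ?_)
  rw [norm_inv, norm_pow, Complex.sq_norm, normSq_add_mul_I]
  field_simp
  ring

lemma integrable_cexp_mul_div_sq {ε : ℝ} (hε : ε ≠ 0) (k : ℝ) :
    Integrable (fun x : ℝ => cexp (I * k * x) / ((x : ℂ) + ε * I) ^ 2) := by
  simp_rw [div_eq_mul_inv]
  refine (integrable_inv_sq_ofReal_add_mul_I hε).bdd_mul (c := 1)
    (Continuous.aestronglyMeasurable (by fun_prop)) (.of_forall fun x => ?_)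
  rw [show I * k * x = ((k * x : ℝ) : ℂ) * I by push_cast; ring, norm_exp_ofReal_mul_I]

section OneSidedExponential

variable {c : ℂ}

lemma tendsto_ofReal_mul_cexp_atBot (hc : 0 < c.re) :
    Tendsto (fun t : ℝ => (t : ℂ) * cexp (c * t)) atBot (𝓝 0) := by
  rw [← tendsto_comp_neg_atTop_iff, tendsto_zero_iff_norm_tendsto_zero]
  refine (tendsto_rpow_mul_exp_neg_mul_atTop_nhds_zero 1 c.re hc).congr' ?_
  filter_upwards [eventually_ge_atTop 0] with s hs
  simp [norm_exp, abs_of_nonneg hs]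

lemma integrableOn_Iic_ofReal_mul_cexp (hc : 0 < c.re) :
    IntegrableOn (fun t : ℝ => (t : ℂ) * cexp (c * t)) (Iic 0) := by
  have hreal : IntegrableOn (fun s : ℝ => s * Real.exp (-c.re * s)) (Ioi 0) := by
    simpa using integrableOn_rpow_mul_exp_neg_mul_rpow (s := 1) (p := 1) (by norm_num) one_pos hc
  have hreflected :
      IntegrableOn (fun s : ℝ => ((-s : ℝ) : ℂ) * cexp (c * (-s : ℝ))) (Ioi 0) := by
    have hcont : Continuous fun s : ℝ => ((-s : ℝ) : ℂ) * cexp (c * (-s : ℝ)) := by fun_prop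
    refine hreal.mono' hcont.aestronglyMeasurable ?_
    filter_upwards [ae_restrict_mem measurableSet_Ioi] with s hs
    simp [norm_exp, abs_of_pos hs.out]
  rw [integrableOn_Iic_iff_integrableOn_Iio]
  exact (IntegrableOn.comp_neg_Iio (c := (0 : ℝ)) (by rwa [neg_zero])).congr_fun
    (fun t _ => by simp only [neg_neg]) measurableSet_Iio

lemma integral_Iic_ofReal_mul_cexp (hc : 0 < c.re) :
    ∫ t in Iic (0 : ℝ), (t : ℂ) * cexp (c * t) = -(c ^ 2)⁻¹ := by
  have hc0 : c ≠ 0 := fun h => by simp [h] at hc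
  have hderiv (t : ℝ) : HasDerivAt (fun t : ℝ => ((t : ℂ) / c - (c ^ 2)⁻¹) * cexp (c * t))
      ((t : ℂ) * cexp (c * t)) t := by
    have hid : HasDerivAt (fun t : ℝ => (t : ℂ)) 1 t := (hasDerivAt_id t).ofReal_comp
    refine (((hid.div_const c).sub_const _).mul (hid.const_mul c).cexp).congr_deriv ?_
    field_simp
    ring
  have hlim : Tendsto (fun t : ℝ => ((t : ℂ) / c - (c ^ 2)⁻¹) * cexp (c * t)) atBot (𝓝 0) := by
    have hexp : Tendsto (fun t : ℝ => cexp (c * t)) atBot (𝓝 0) := by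
      rw [tendsto_exp_nhds_zero_iff]
      simpa using tendsto_id.const_mul_atBot hc
    simpa [sub_mul, div_mul_eq_mul_div] using
      ((tendsto_ofReal_mul_cexp_atBot hc).div_const c).sub (hexp.const_mul (c ^ 2)⁻¹)
  rw [integral_Iic_of_hasDerivAt_of_tendsto' (fun t _ => hderiv t)
    (integrableOn_Iic_ofReal_mul_cexp hc) hlim]
  simp

end OneSidedExponential

noncomputable def negRampExp (ε t : ℝ) : ℂ := (min t 0 : ℝ) * cexp (ε * (min t 0 : ℝ))

lemma continuous_negRampExp (ε : ℝ) : Continuous (negRampExp ε) := by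
  unfold negRampExp; fun_prop

lemma negRampExp_eq_indicator (ε : ℝ) :
    negRampExp ε = (Iic 0).indicator (fun t : ℝ => (t : ℂ) * cexp (ε * t)) := by
  ext t
  rcases le_or_gt t 0 with ht | ht
  · simp [negRampExp, ht]
  · simp [negRampExp, ht.le, ht.not_ge]

lemma integrable_negRampExp {ε : ℝ} (hε : 0 < ε) : Integrable (negRampExp ε) := by
  rw [negRampExp_eq_indicator, integrable_indicator_iff measurableSet_Iic]
  exact integrableOn_Iic_ofReal_mul_cexp (by simpa using hε)

lemma fourier_negRampExp {ε : ℝ} (hε : 0 < ε) (ξ : ℝ) :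
    𝓕 (negRampExp ε) ξ = ((2 * π * ξ + ε * I) ^ 2)⁻¹ := by
  set c : ℂ := ε - 2 * π * ξ * I
  have hc : 0 < c.re := by simpa [c] using hε
  have hintegrand (v : ℝ) : cexp (↑(-2 * π * v * ξ) * I) • negRampExp ε v
      = (Iic 0).indicator (fun t : ℝ => (t : ℂ) * cexp (c * t)) v := by
    rw [negRampExp_eq_indicator]
    by_cases hv : v ∈ Iic 0
    · rw [indicator_of_mem hv, indicator_of_mem hv, smul_eq_mul, mul_left_comm, ← Complex.exp_add]
      push_cast [c]
      ring_nf
    · rw [indicator_of_notMem hv, indicator_of_notMem hv, smul_zero]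
  have hsq : c ^ 2 = -(2 * π * ξ + ε * I) ^ 2 := by
    linear_combination (ε ^ 2 + (2 * π * ξ) ^ 2 : ℂ) * I_sq
  rw [Real.fourier_real_eq_integral_exp_smul, funext hintegrand,
    integral_indicator measurableSet_Iic, integral_Iic_ofReal_mul_cexp hc, hsq, neg_inv, neg_neg]

lemma integrable_fourier_negRampExp {ε : ℝ} (hε : 0 < ε) : Integrable (𝓕 (negRampExp ε)) := by
  refine ((integrable_inv_sq_ofReal_add_mul_I hε.ne').comp_mul_left'
    (by positivity : 2 * π ≠ 0)).congr (.of_forall fun ξ => ?_)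
  rw [fourier_negRampExp hε]
  push_cast
  rfl

lemma integral_cexp_mul_div_sq {ε : ℝ} (hε : 0 < ε) (k : ℝ) :
    ∫ x : ℝ, cexp (I * k * x) / ((x : ℂ) + ε * I) ^ 2 = 2 * π * negRampExp ε k := by
  set f := fun x : ℝ => cexp (I * k * x) / ((x : ℂ) + ε * I) ^ 2
  have hrescaled : ∫ y, f (2 * π * y) = 𝓕⁻ (𝓕 (negRampExp ε)) k := by
    rw [fourierInv_eq']
    congr 1
    ext y
    rw [fourier_negRampExp hε, smul_eq_mul]
    simp only [f, div_eq_mul_inv, Real.inner_apply]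
    push_cast
    ring_nf
  calc ∫ x, f x = (2 * π : ℝ) • ∫ y, f (2 * π * y) := by
        rw [Measure.integral_comp_mul_left, smul_smul, abs_of_pos (by positivity),
          mul_inv_cancel₀ (by positivity), one_smul]
    _ = 2 * π * negRampExp ε k := by
        rw [hrescaled, (continuous_negRampExp ε).fourierInv_fourier_eq (integrable_negRampExp hε)
          (integrable_fourier_negRampExp hε), Complex.real_smul]
        push_cast
        rfl

/-- `x ↦ e^{ikx}/(x+iε)²` is absolutely integrable and its integral is
`2πk e^{εk}` for `k ≤ 0` and `0` for `k ≥ 0`. -/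
theorem stmt8 (ε : ℝ) (hε : 0 < ε) (k : ℝ) :
    Integrable (fun x : ℝ =>
      Complex.exp (Complex.I * (k : ℂ) * (x : ℂ)) / ((x : ℂ) + (ε : ℂ) * Complex.I) ^ 2) ∧
    (k ≤ 0 → ∫ x : ℝ,
        Complex.exp (Complex.I * (k : ℂ) * (x : ℂ)) / ((x : ℂ) + (ε : ℂ) * Complex.I) ^ 2
      = 2 * (Real.pi : ℂ) * (k : ℂ) * Complex.exp ((ε : ℂ) * (k : ℂ))) ∧
    (0 ≤ k → ∫ x : ℝ,
        Complex.exp (Complex.I * (k : ℂ) * (x : ℂ)) / ((x : ℂ) + (ε : ℂ) * Complex.I) ^ 2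
      = 0) := by
  refine ⟨integrable_cexp_mul_div_sq hε.ne' k, fun hk => ?_, fun hk => ?_⟩
  · rw [integral_cexp_mul_div_sq hε, negRampExp, min_eq_left hk]
    ring
  · rw [integral_cexp_mul_div_sq hε, negRampExp, min_eq_right hk]
    simp
end

section
/- Let F : ℝ → ℂ be measurable and bounded (‖F(q)‖ ≤ B for all q), and suppose F is fast decreasing on [0, ∞): for every integer N there is C_N ≥ 0 with ‖F(q)‖ ≤ C_N (1 + q)^{-N} for all q ≥ 0. Then for every k ∈ ℝ the function q ↦ F(q)·F(k − q) is absolutely integrable on ℝ. (This proves that the square of the distribution 1/(x + i0⁺) is well defined: its localized Fourier transform is fast decreasing in the positive direction only, and the convolution integral converges absolutely.) -/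
/-!
Split `ℝ` into `q ≤ k`, `k ≤ q ≤ 0` and `0 ≤ q`. On `q ≥ 0` the factor `F q` is integrable, since
the decay bound with `N = 2` dominates it by `C (1 + q)⁻²`; on `q ≤ k` the factor `F (k - q)` is
integrable for the same reason; in both cases the other factor is bounded by `B`. The middle
piece is a bounded function on a compact interval.
-/

open MeasureTheory Filter Set

theorem integrableOn_Iic_comp_sub_left {E : Type*} [NormedAddCommGroup E] {g : ℝ → E}
    (hg : IntegrableOn g (Ici 0)) (k : ℝ) : IntegrableOn (fun q => g (k - q)) (Iic k) := by
  have hpre : (fun q : ℝ => k - q) ⁻¹' Ici 0 = Iic k := by ext; simp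
  rw [← hpre]
  exact ((Measure.measurePreserving_sub_left volume k).integrableOn_comp_preimage
    (Homeomorph.subLeft k).measurableEmbedding).2 hg

theorem integrableOn_Ici_of_norm_le_mul_one_add_zpow {E : Type*} [NormedAddCommGroup E]
    {f : ℝ → E} (hf : AEStronglyMeasurable f) {C : ℝ}
    (hC : ∀ q, 0 ≤ q → ‖f q‖ ≤ C * (1 + q) ^ (-2 : ℤ)) : IntegrableOn f (Ici 0) := by
  have hmaj : Integrable (fun q : ℝ => C * (1 + ‖q‖) ^ (-(2 : ℝ))) :=
    (integrable_one_add_norm (by norm_num)).const_mul C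
  refine hmaj.integrableOn.mono' hf.restrict ((ae_restrict_iff' measurableSet_Ici).2
    (Eventually.of_forall fun q (hq : 0 ≤ q) => ?_))
  rw [Real.norm_of_nonneg hq, show (-(2 : ℝ)) = ((-2 : ℤ) : ℝ) by norm_num, Real.rpow_intCast]
  exact hC q hq

theorem integrable_mul_comp_sub_left {R : Type*} [NormedRing R] {f g : ℝ → R}
    (hf : AEStronglyMeasurable f) (hg : AEStronglyMeasurable g) {B : ℝ}
    (hfB : ∀ q, ‖f q‖ ≤ B) (hgB : ∀ q, ‖g q‖ ≤ B)
    (hf₀ : IntegrableOn f (Ici 0)) (hg₀ : IntegrableOn g (Ici 0)) (k : ℝ) :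
    Integrable (fun q => f q * g (k - q)) := by
  have hgk : AEStronglyMeasurable (fun q => g (k - q)) :=
    hg.comp_measurePreserving (Measure.measurePreserving_sub_left volume k)
  have hcover : Iic k ∪ Icc k 0 ∪ Ici 0 = univ := by
    ext q; simp only [mem_union, mem_Iic, mem_Icc, mem_Ici, mem_univ, iff_true]
    by_contra! h; linarith [h.1.2 h.1.1.le]
  rw [← integrableOn_univ, ← hcover]
  refine (IntegrableOn.union ?_ ?_).union ?_
  · exact (integrableOn_Iic_comp_sub_left hg₀ k).bdd_mul hf.restrict (Eventually.of_forall hfB)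
  · refine Measure.integrableOn_of_bounded (M := B * B) measure_Icc_lt_top.ne (hf.mul hgk)
      (Eventually.of_forall fun q => ?_)
    exact (norm_mul_le _ _).trans
      (mul_le_mul (hfB q) (hgB _) (norm_nonneg _) ((norm_nonneg _).trans (hfB q)))
  · exact hf₀.mul_bdd hgk.restrict (Eventually.of_forall fun q => hgB _)

/-- If `F` is measurable, bounded, and fast decreasing on `[0,∞)`, then for every `k`
the convolution integrand `q ↦ F q * F (k - q)` is absolutely integrable on `ℝ`. -/
theorem stmt10 (F : ℝ → ℂ) (hF : Measurable F) (B : ℝ) (hB : ∀ q : ℝ, ‖F q‖ ≤ B)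
    (hfast : ∀ N : ℕ, ∃ C : ℝ, 0 ≤ C ∧ ∀ q : ℝ, 0 ≤ q → ‖F q‖ ≤ C * (1 + q) ^ (-(N : ℤ))) :
    ∀ k : ℝ, Integrable (fun q : ℝ => F q * F (k - q)) := by
  obtain ⟨C, -, hC⟩ := hfast 2
  have hF₀ : IntegrableOn F (Ici 0) :=
    integrableOn_Ici_of_norm_le_mul_one_add_zpow hF.aestronglyMeasurable hC
  exact integrable_mul_comp_sub_left hF.aestronglyMeasurable hF.aestronglyMeasurable hB hB hF₀ hF₀
end

section
/- Let F : ℝ → ℂ be measurable and bounded, fast decreasing on [0, ∞) (for every integer N there is C_N with ‖F(q)‖ ≤ C_N(1+q)^{-N} for q ≥ 0), and suppose F(q) → c as q → −∞ for some constant c ≠ 0. Fix k ∈ ℝ and set I_M(k) = ∫_{−M}^{∞} F(q)·(c − F(k − q)) dq. Then ‖I_M(k)‖ → ∞ as M → +∞. (This proves that the product of 1/(x+i0⁺) and 1/(x−i0⁺) does not exist: no choice of localizing test function makes the convolution integral converge.) -/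
/-!
Write `g q = F q * (c - F (k - q))`. Fast decay makes `g` integrable on `[0, ∞)`, and boundedness
makes it integrable on every `[t, ∞)`. As `q → -∞`, `F q → c` while `k - q → ∞` forces
`F (k - q) → 0`, so `g q → c²`. Once `‖g q - c²‖ ≤ ‖c²‖ / 2` for `q ≤ a`, the integral over
`[-M, a)` has norm at least `(M + a) ‖c²‖ / 2`, while the integral over `[a, ∞)` is a fixed
vector, so `‖I_M(k)‖` grows at least linearly in `M`.
-/

open MeasureTheory Filter Set Topology

section Asymptotics

variable {E : Type*} [NormedAddCommGroup E] [NormedSpace ℝ E] [CompleteSpace E]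

theorem le_norm_setIntegral_Ico_of_norm_sub_le {g : ℝ → E} {L : E} {ε s a : ℝ} (hsa : s ≤ a)
    (hg : IntegrableOn g (Ico s a)) (hgL : ∀ q ∈ Ico s a, ‖g q - L‖ ≤ ε) :
    (a - s) * (‖L‖ - ε) ≤ ‖∫ q in Ico s a, g q‖ := by
  have hvol : volume.real (Ico s a) = a - s := by simp [hsa]
  have hsplit : ∫ q in Ico s a, g q = (∫ q in Ico s a, (g q - L)) + (a - s) • L := by
    rw [integral_sub hg (integrableOn_const measure_Ico_lt_top.ne), setIntegral_const, hvol]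
    abel
  have herr : ‖∫ q in Ico s a, (g q - L)‖ ≤ ε * (a - s) := by
    simpa only [hvol] using norm_setIntegral_le_of_norm_le_const (μ := volume) measure_Ico_lt_top hgL
  have hL : ‖(a - s) • L‖ = (a - s) * ‖L‖ := by
    rw [norm_smul, Real.norm_of_nonneg (sub_nonneg.2 hsa)]
  have htri := norm_le_add_norm_add ((a - s) • L) (∫ q in Ico s a, (g q - L))
  rw [hsplit, add_comm]
  linarith

theorem tendsto_norm_setIntegral_Ici_neg_atTop {g : ℝ → E} {L : E} (hL : L ≠ 0)
    (hlim : Tendsto g atBot (𝓝 L)) (hint : ∀ t, IntegrableOn g (Ici t)) :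
    Tendsto (fun M => ‖∫ q in Ici (-M), g q‖) atTop atTop := by
  obtain ⟨a, ha⟩ : ∃ a, ∀ q ≤ a, ‖g q - L‖ ≤ ‖L‖ / 2 := by
    have hnear := hlim.eventually (Metric.closedBall_mem_nhds L (half_pos (norm_pos_iff.2 hL)))
    simpa only [Metric.mem_closedBall, dist_eq_norm] using eventually_atBot.1 hnear
  set T := ∫ q in Ici a, g q
  have hbound : ∀ M, -a ≤ M → (M + a) * (‖L‖ / 2) - ‖T‖ ≤ ‖∫ q in Ici (-M), g q‖ := by
    intro M hM
    have hIco : IntegrableOn g (Ico (-M) a) := (hint _).mono_set Ico_subset_Ici_self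
    have hsplit : ∫ q in Ici (-M), g q = (∫ q in Ico (-M) a, g q) + T := by
      rw [← setIntegral_union ((Iio_disjoint_Ici le_rfl).mono_left Ico_subset_Iio_self) measurableSet_Ici hIco (hint a),
        Ico_union_Ici_eq_Ici (by linarith)]
    have hnear := le_norm_setIntegral_Ico_of_norm_sub_le (by linarith) hIco
      (fun q hq => ha q hq.2.le)
    have htri := norm_le_add_norm_add (∫ q in Ico (-M) a, g q) T
    rw [hsplit]
    linarith
  have hlin : Tendsto (fun M => (M + a) * (‖L‖ / 2) - ‖T‖) atTop atTop :=
    tendsto_atTop_add_const_right _ _ <|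
      (tendsto_atTop_add_const_right _ a tendsto_id).atTop_mul_const (by positivity)
  exact tendsto_atTop_mono' _ ((eventually_ge_atTop (-a)).mono hbound) hlin

end Asymptotics

section Decay

variable {E : Type*} [NormedAddCommGroup E] {F : ℝ → E} {C : ℝ} {N : ℕ}

theorem tendsto_atTop_zero_of_norm_le_one_add_zpow (hN : 0 < N)
    (hF : ∀ q, 0 ≤ q → ‖F q‖ ≤ C * (1 + q) ^ (-(N : ℤ))) : Tendsto F atTop (𝓝 0) := by
  have hdecay : Tendsto (fun q : ℝ => C * (1 + q) ^ (-(N : ℤ))) atTop (𝓝 0) := by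
    simpa using ((tendsto_zpow_atTop_zero (n := -(N : ℤ)) (by omega)).comp
      (tendsto_atTop_add_const_left atTop 1 tendsto_id)).const_mul C
  exact squeeze_zero_norm' ((eventually_ge_atTop 0).mono hF) hdecay

theorem integrableOn_Ici_of_norm_le_one_add_zpow (hFm : AEStronglyMeasurable F) (hN : 2 ≤ N)
    (hF : ∀ q, 0 ≤ q → ‖F q‖ ≤ C * (1 + q) ^ (-(N : ℤ))) : IntegrableOn F (Ici 0) := by
  have hmaj : Integrable (fun q : ℝ => C * (1 + ‖q‖) ^ (-(N : ℝ))) :=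
    (integrable_one_add_norm (by rw [Module.finrank_self]; exact_mod_cast hN)).const_mul C
  refine hmaj.integrableOn.mono' hFm.restrict ((ae_restrict_iff' measurableSet_Ici).2 ?_)
  refine Eventually.of_forall fun q (hq : 0 ≤ q) => (hF q hq).trans_eq ?_
  rw [Real.norm_of_nonneg hq, ← Real.rpow_intCast]
  norm_num

theorem MeasureTheory.IntegrableOn.Ici_of_norm_le {a B : ℝ} (h : IntegrableOn F (Ici a))
    (hFm : AEStronglyMeasurable F) (hB : ∀ q, ‖F q‖ ≤ B) (t : ℝ) : IntegrableOn F (Ici t) := by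
  have hIcc : IntegrableOn F (Icc t a) :=
    .of_bound measure_Icc_lt_top hFm.restrict B (Eventually.of_forall hB)
  refine (hIcc.union h).mono_set fun q (hq : t ≤ q) => ?_
  rcases le_total q a with hqa | haq
  exacts [Or.inl ⟨hq, hqa⟩, Or.inr haq]

end Decay

/-- If `F` is measurable, bounded, fast decreasing on `[0,∞)`, and `F(q) → c ≠ 0` as
`q → -∞`, then `I_M(k) = ∫_{-M}^∞ F(q)(c - F(k-q)) dq` satisfies `‖I_M(k)‖ → ∞`. -/
theorem stmt11 (F : ℝ → ℂ) (hF : Measurable F) (B : ℝ) (hB : ∀ q : ℝ, ‖F q‖ ≤ B)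
    (hfast : ∀ N : ℕ, ∃ C : ℝ, 0 ≤ C ∧ ∀ q : ℝ, 0 ≤ q → ‖F q‖ ≤ C * (1 + q) ^ (-(N : ℤ)))
    (c : ℂ) (hc : c ≠ 0) (hlim : Tendsto F atBot (nhds c)) (k : ℝ) :
    Tendsto (fun M : ℝ => ‖∫ q in Ici (-M), F q * (c - F (k - q))‖) atTop atTop := by
  obtain ⟨C, -, hC⟩ := hfast 2
  have hFint : ∀ t, IntegrableOn F (Ici t) :=
    (integrableOn_Ici_of_norm_le_one_add_zpow hF.aestronglyMeasurable le_rfl hC).Ici_of_norm_le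
      hF.aestronglyMeasurable hB
  have hreflect : Tendsto (fun q : ℝ => k - q) atBot atTop :=
    tendsto_atTop_add_const_left _ k tendsto_neg_atBot_atTop
  have hFreflect : Tendsto (fun q => F (k - q)) atBot (𝓝 0) :=
    (tendsto_atTop_zero_of_norm_le_one_add_zpow two_pos hC).comp hreflect
  refine tendsto_norm_setIntegral_Ici_neg_atTop (L := c * c) (mul_ne_zero hc hc) ?_ fun t => ?_
  · simpa using hlim.mul (tendsto_const_nhds.sub hFreflect)
  · refine (hFint t).mul_bdd (c := ‖c‖ + B)
      ((hF.comp (measurable_const.sub measurable_id)).const_sub c).aestronglyMeasurable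
      (Eventually.of_forall fun q => ?_)
    exact (norm_sub_le _ _).trans (by linarith [hB (k - q)])
end

section
/- Let n ≥ 1, let u : ℝⁿ → ℂ (ℝⁿ with the Euclidean inner product) be integrable, and let ν ∈ ℝⁿ be a unit vector. For s ∈ ℝ define the Radon transform R(u)(ν, s) = ∫_{ν^⊥} u(sν + y) dy, where ν^⊥ is the orthogonal complement of the line ℝν with its canonical Lebesgue measure. Then for every k ∈ ℝ, the Fourier transform of u along the ray through ν satisfies û(kν) = ∫_ℝ e^{iks} R(u)(ν, s) ds, where û(p) = ∫_{ℝⁿ} e^{i⟨p,x⟩} u(x) dx. -/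
/-!
The map `(s, y) ↦ s • ν + y` from `ℝ × ν^⊥` onto `ℝⁿ` is the inverse of the orthogonal
decomposition along the unit vector `ν`, a linear isometry, so it preserves Lebesgue measure.
Fubini over `ℝ × ν^⊥` then evaluates `û(kν)`, since the phase `e^{ik⟨ν, sν + y⟩} = e^{iks}`
is constant on each hyperplane `sν + ν^⊥`.
-/

open MeasureTheory Filter Set
open scoped RealInnerProductSpace

section InnerProduct

variable {E : Type*} [NormedAddCommGroup E] [InnerProductSpace ℝ E] {ν : E}

theorem inner_smul_add_orthogonal (hν : ‖ν‖ = 1) (s : ℝ) (y : (ℝ ∙ ν)ᗮ) :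
    ⟪ν, s • ν + y⟫ = s := by
  rw [inner_add_right, real_inner_smul_right, real_inner_self_eq_norm_sq, hν,
    Submodule.inner_right_of_mem_orthogonal (Submodule.mem_span_singleton_self ν) y.2]
  ring

end InnerProduct

section Measure

variable {E : Type*} [NormedAddCommGroup E] [InnerProductSpace ℝ E] [FiniteDimensional ℝ E]
  [MeasurableSpace E] [BorelSpace E] {ν : E}

noncomputable def prodOrthogonalSpanSingletonEquiv (ν : E) (hν : ‖ν‖ = 1) :
    ℝ × (ℝ ∙ ν)ᗮ ≃ᵐ E :=
  (MeasurableEquiv.prodCongr (LinearIsometryEquiv.toSpanUnitSingleton ν hν).toMeasurableEquiv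
      (MeasurableEquiv.refl _)).trans <|
    (MeasurableEquiv.toLp 2 _).trans (ℝ ∙ ν).orthogonalDecomposition.symm.toMeasurableEquiv

@[simp]
theorem prodOrthogonalSpanSingletonEquiv_apply (hν : ‖ν‖ = 1) (p : ℝ × (ℝ ∙ ν)ᗮ) :
    prodOrthogonalSpanSingletonEquiv ν hν p = p.1 • ν + p.2 := by
  simp [prodOrthogonalSpanSingletonEquiv, MeasurableEquiv.prodCongr]

theorem measurePreserving_prodOrthogonalSpanSingletonEquiv (hν : ‖ν‖ = 1) :
    MeasurePreserving (prodOrthogonalSpanSingletonEquiv ν hν) :=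
  ((LinearIsometryEquiv.toSpanUnitSingleton ν hν).measurePreserving.prod
    (MeasurePreserving.id volume)).trans <|
    (WithLp.volume_preserving_symm_measurableEquiv_toLp_prod _ _).symm.trans
      (LinearIsometryEquiv.measurePreserving _)

theorem integral_eq_integral_integral_smul_add_orthogonal {F : Type*} [NormedAddCommGroup F]
    [NormedSpace ℝ F] (hν : ‖ν‖ = 1) {f : E → F} (hf : Integrable f) :
    ∫ x, f x = ∫ s : ℝ, ∫ y : (ℝ ∙ ν)ᗮ, f (s • ν + y) := by
  have hmp := measurePreserving_prodOrthogonalSpanSingletonEquiv hν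
  rw [← hmp.integral_comp', Measure.volume_eq_prod, integral_prod]
  · simp
  · rw [← Measure.volume_eq_prod]
    simpa [Function.comp_def] using
      (hmp.integrable_comp_emb (MeasurableEquiv.measurableEmbedding _)).2 hf

end Measure

theorem stmt13_general (n : ℕ) (u : EuclideanSpace ℝ (Fin n) → ℂ)
    (hu : Integrable u) (ν : EuclideanSpace ℝ (Fin n)) (hν : ‖ν‖ = 1) :
    ∀ k : ℝ,
      (∫ x, Complex.exp (Complex.I * ((k : ℂ) * (⟪ν, x⟫ : ℝ))) * u x)
        = ∫ s : ℝ, Complex.exp (Complex.I * (k : ℂ) * (s : ℂ)) *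
            ∫ y : (Submodule.span ℝ {ν})ᗮ, u (s • ν + (y : EuclideanSpace ℝ (Fin n))) := by
  intro k
  have hint : Integrable fun x => Complex.exp (Complex.I * ((k : ℂ) * (⟪ν, x⟫ : ℝ))) * u x :=
    hu.bdd_mul (c := 1) (by fun_prop) (.of_forall fun x => by rw [Complex.norm_exp]; simp)
  rw [integral_eq_integral_integral_smul_add_orthogonal hν hint]
  congr 1 with s
  rw [← integral_const_mul]
  congr 1 with y
  rw [inner_smul_add_orthogonal hν, mul_assoc]

/-- Radon transform and Fourier transform: for integrable `u` on ℝⁿ and a unit vector `ν`,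
`û(kν) = ∫ e^{iks} R(u)(ν,s) ds` where `R(u)(ν,s) = ∫_{ν^⊥} u(sν + y) dy`. -/
theorem stmt13 (n : ℕ) (hn : 1 ≤ n) (u : EuclideanSpace ℝ (Fin n) → ℂ)
    (hu : Integrable u) (ν : EuclideanSpace ℝ (Fin n)) (hν : ‖ν‖ = 1) :
    ∀ k : ℝ,
      (∫ x, Complex.exp (Complex.I * ((k : ℂ) * (⟪ν, x⟫ : ℝ))) * u x)
        = ∫ s : ℝ, Complex.exp (Complex.I * (k : ℂ) * (s : ℂ)) *
            ∫ y : (Submodule.span ℝ {ν})ᗮ, u (s • ν + (y : EuclideanSpace ℝ (Fin n))) :=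
  stmt13_general n u hu ν hν
end
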